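/- arXiv:1108.3126 — 2 statements merged into one kernel-verified Lean document; each statement's English description precedes it below -/
import Mathlib

section
/- Stack-reconstruction simulation invariant: let π,p₀ ⊨ e and π ⊨ k, and define stackOf(p) = [] if k(p) = null, and stackOf(p) = e' :: stackOf(q) if k(p) = q ≠ null where the subtree of π rooted at q represents e'. Then for every pointer p ∈ dom(π) whose subtree in π represents the regular expression e', there is a run of the PWπ machine ⟨p | w⟩ →* ⟨null | ε⟩ if and only if there is a run of the EKW machine ⟨e' | stackOf(p) | w⟩ →* ⟨ε | [] | ε⟩. -/
set_option autoImplicit false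

namespace RegexMachines

/-- Regular expressions over an alphabet `α`. -/
inductive RE (α : Type) : Type where
  | eps : RE α
  | ch (a : α) : RE α
  | star (e : RE α) : RE α
  | seq (e₁ e₂ : RE α) : RE α
  | alt (e₁ e₂ : RE α) : RE α

/-- The big-step matching relation `e ⊨ w`. -/
inductive Matches {α : Type} : RE α → List α → Prop where
  | eps : Matches RE.eps []
  | ch (a : α) : Matches (RE.ch a) [a]
  | seq {e₁ e₂ : RE α} {w₁ w₂ : List α} :
      Matches e₁ w₁ → Matches e₂ w₂ → Matches (RE.seq e₁ e₂) (w₁ ++ w₂)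
  | starNil {e : RE α} : Matches (RE.star e) []
  | starCons {e : RE α} {w₁ w₂ : List α} :
      Matches e w₁ → Matches (RE.star e) w₂ → Matches (RE.star e) (w₁ ++ w₂)
  | altL {e₁ e₂ : RE α} {w : List α} : Matches e₁ w → Matches (RE.alt e₁ e₂) w
  | altR {e₁ e₂ : RE α} {w : List α} : Matches e₂ w → Matches (RE.alt e₁ e₂) w

/-- Configurations `⟨e | k | w⟩` of the EKW machine. -/
abbrev EKWConfig (α : Type) : Type := RE α × List (RE α) × List α

/-- Transitions of the EKW machine. -/
inductive EKWStep {α : Type} : EKWConfig α → EKWConfig α → Prop where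
  | altL {e₁ e₂ : RE α} {k : List (RE α)} {w : List α} :
      EKWStep (RE.alt e₁ e₂, k, w) (e₁, k, w)
  | altR {e₁ e₂ : RE α} {k : List (RE α)} {w : List α} :
      EKWStep (RE.alt e₁ e₂, k, w) (e₂, k, w)
  | seq {e₁ e₂ : RE α} {k : List (RE α)} {w : List α} :
      EKWStep (RE.seq e₁ e₂, k, w) (e₁, e₂ :: k, w)
  | starIn {e : RE α} {k : List (RE α)} {w : List α} :
      EKWStep (RE.star e, k, w) (e, RE.star e :: k, w)
  | starOut {e : RE α} {k : List (RE α)} {w : List α} :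
      EKWStep (RE.star e, k, w) (RE.eps, k, w)
  | ch {a : α} {k : List (RE α)} {w : List α} :
      EKWStep (RE.ch a, k, a :: w) (RE.eps, k, w)
  | pop {e : RE α} {k : List (RE α)} {w : List α} :
      EKWStep (RE.eps, e :: k, w) (e, k, w)

/-- Syntax-tree nodes stored in a heap; pointer arguments are natural numbers. -/
inductive Node (α : Type) : Type where
  | eps : Node α
  | ch (a : α) : Node α
  | alt (p₁ p₂ : ℕ) : Node α
  | seq (p₁ p₂ : ℕ) : Node α
  | star (p₁ : ℕ) : Node α

/-- A heap is a partial function from (non-null) pointers to nodes.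
The distinguished null pointer is modelled by `none : Option ℕ` wherever a
pointer-or-null is needed. -/
abbrev Heap (α : Type) : Type := ℕ → Option (Node α)

/-- Disjointness of two heaps (the `⊗` side condition). -/
def hDisj {α : Type} (π₁ π₂ : Heap α) : Prop := ∀ q : ℕ, π₁ q = none ∨ π₂ q = none

/-- Union of two heaps (`⊗`). -/
def hUnion {α : Type} (π₁ π₂ : Heap α) : Heap α :=
  fun q => (π₁ q).orElse (fun _ => π₂ q)

/-- The singleton heap `p ↦ v`. -/
def singleH {α : Type} (p : ℕ) (v : Node α) : Heap α :=
  fun q => if q = p then some v else none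

/-- Domain of a heap. -/
def hDom {α : Type} (π : Heap α) : Set ℕ := { q : ℕ | (π q).isSome }

/-- `dom(π) ∪ {null}` as a set of pointer-or-null values. -/
def domP {α : Type} (π : Heap α) : Set (Option ℕ) :=
  insert none { q : Option ℕ | ∃ n : ℕ, q = some n ∧ (π n).isSome }

/-- The representation relation `π, p ⊨ e`. -/
inductive HeapRepr {α : Type} : Heap α → ℕ → RE α → Prop where
  | eps {p : ℕ} : HeapRepr (singleH p Node.eps) p RE.eps
  | ch {p : ℕ} {a : α} : HeapRepr (singleH p (Node.ch a)) p (RE.ch a)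
  | alt {π π₁ π₂ : Heap α} {p p₁ p₂ : ℕ} {e₁ e₂ : RE α} :
      π = hUnion (singleH p (Node.alt p₁ p₂)) (hUnion π₁ π₂) →
      hDisj (singleH p (Node.alt p₁ p₂)) π₁ →
      hDisj (singleH p (Node.alt p₁ p₂)) π₂ →
      hDisj π₁ π₂ →
      HeapRepr π₁ p₁ e₁ → HeapRepr π₂ p₂ e₂ → HeapRepr π p (RE.alt e₁ e₂)
  | seq {π π₁ π₂ : Heap α} {p p₁ p₂ : ℕ} {e₁ e₂ : RE α} :
      π = hUnion (singleH p (Node.seq p₁ p₂)) (hUnion π₁ π₂) →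
      hDisj (singleH p (Node.seq p₁ p₂)) π₁ →
      hDisj (singleH p (Node.seq p₁ p₂)) π₂ →
      hDisj π₁ π₂ →
      HeapRepr π₁ p₁ e₁ → HeapRepr π₂ p₂ e₂ → HeapRepr π p (RE.seq e₁ e₂)
  | star {π π₁ : Heap α} {p p₁ : ℕ} {e₁ : RE α} :
      π = hUnion (singleH p (Node.star p₁)) π₁ →
      hDisj (singleH p (Node.star p₁)) π₁ →
      HeapRepr π₁ p₁ e₁ → HeapRepr π p (RE.star e₁)

/-- `π ⊨ k`: the continuation function `k : dom(π) → dom(π) ∪ {null}` (with root `p₀`). -/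
def KOk {α : Type} (π : Heap α) (k : ℕ → Option ℕ) (p₀ : ℕ) : Prop :=
  (∀ p : ℕ, (π p).isSome → k p = none ∨ ∃ q : ℕ, k p = some q ∧ (π q).isSome) ∧
  (∀ p q₁ q₂ : ℕ, π p = some (Node.alt q₁ q₂) → k q₁ = k p ∧ k q₂ = k p) ∧
  (∀ p q₁ q₂ : ℕ, π p = some (Node.seq q₁ q₂) → k q₁ = some q₂ ∧ k q₂ = k p) ∧
  (∀ p q₁ : ℕ, π p = some (Node.star q₁) → k q₁ = some p) ∧
  k p₀ = none

/-- Unlabeled pointer transitions `p ⇀ q` relative to `π` and `k`. -/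
inductive PStep {α : Type} (π : Heap α) (k : ℕ → Option ℕ) :
    Option ℕ → Option ℕ → Prop where
  | altL {p q₁ q₂ : ℕ} : π p = some (Node.alt q₁ q₂) → PStep π k (some p) (some q₁)
  | altR {p q₁ q₂ : ℕ} : π p = some (Node.alt q₁ q₂) → PStep π k (some p) (some q₂)
  | seq {p q₁ q₂ : ℕ} : π p = some (Node.seq q₁ q₂) → PStep π k (some p) (some q₁)
  | starIn {p q₁ : ℕ} : π p = some (Node.star q₁) → PStep π k (some p) (some q₁)
  | starOut {p q₁ : ℕ} : π p = some (Node.star q₁) → PStep π k (some p) (k p)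
  | eps {p : ℕ} : π p = some Node.eps → PStep π k (some p) (k p)

/-- Labeled pointer transitions `p ⇀ᵃ k(p)` relative to `π` and `k`. -/
inductive PStepA {α : Type} (π : Heap α) (k : ℕ → Option ℕ) (a : α) :
    Option ℕ → Option ℕ → Prop where
  | ch {p : ℕ} : π p = some (Node.ch a) → PStepA π k a (some p) (k p)

/-- Transitions of the PWπ machine on configurations `⟨p | w⟩`. -/
inductive PWStep {α : Type} (π : Heap α) (k : ℕ → Option ℕ) :
    Option ℕ × List α → Option ℕ × List α → Prop where
  | silent {p q : Option ℕ} {w : List α} : PStep π k p q → PWStep π k (p, w) (q, w)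
  | read {a : α} {p q : Option ℕ} {w : List α} :
      PStepA π k a p q → PWStep π k (p, a :: w) (q, w)

/-- `evolve(S)`: all character nodes reachable from `S` by `⇀*`. -/
def evolve {α : Type} (π : Heap α) (k : ℕ → Option ℕ) (S : Set (Option ℕ)) :
    Set (Option ℕ) :=
  { q : Option ℕ | ∃ (n : ℕ) (a : α), q = some n ∧ π n = some (Node.ch a) ∧
      ∃ p ∈ S, Relation.ReflTransGen (PStep π k) p q }

/-- The lockstep transition `S ⟹ evolve(S)` on pointer sets. -/
def EvolveRel {α : Type} (π : Heap α) (k : ℕ → Option ℕ)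
    (S S' : Set (Option ℕ)) : Prop :=
  S' = evolve π k S

/-- The lockstep transition `S ⟹ᵃ S'` on pointer sets. -/
def CharRel {α : Type} (π : Heap α) (k : ℕ → Option ℕ) (a : α)
    (S S' : Set (Option ℕ)) : Prop :=
  S' = { q : Option ℕ | ∃ p ∈ S, PStepA π k a p q }

/-- Transitions of the generic lockstep machine on configurations `⟨S | w⟩`. -/
inductive LockStep {α : Type} (π : Heap α) (k : ℕ → Option ℕ) :
    Set (Option ℕ) × List α → Set (Option ℕ) × List α → Prop where
  | evolve {S S' : Set (Option ℕ)} {w : List α} :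
      EvolveRel π k S S' → LockStep π k (S, w) (S', w)
  | read {S S' : Set (Option ℕ)} {a : α} {w : List α} :
      CharRel π k a S S' → LockStep π k (S, a :: w) (S', w)

/-- The child relation on pointers of a heap: `q` is a pointer argument of the node at `p`. -/
def Child {α : Type} (π : Heap α) (p q : ℕ) : Prop :=
  (∃ q₂ : ℕ, π p = some (Node.alt q q₂)) ∨ (∃ q₁ : ℕ, π p = some (Node.alt q₁ q)) ∨
  (∃ q₂ : ℕ, π p = some (Node.seq q q₂)) ∨ (∃ q₁ : ℕ, π p = some (Node.seq q₁ q)) ∨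
  π p = some (Node.star q)

/-- The subtree of `π` rooted at `q` represents `e`. -/
def ReprSub {α : Type} (π : Heap α) (q : ℕ) (e : RE α) : Prop :=
  ∃ π₁ π₂ : Heap α, hDisj π₁ π₂ ∧ π = hUnion π₁ π₂ ∧ HeapRepr π₁ q e

/-- `StackOf π k p l`: the continuation stack reconstructed from `p` by following `k` is `l`. -/
inductive StackOf {α : Type} (π : Heap α) (k : ℕ → Option ℕ) :
    ℕ → List (RE α) → Prop where
  | nil {p : ℕ} : k p = none → StackOf π k p []
  | cons {p q : ℕ} {e' : RE α} {l : List (RE α)} :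
      k p = some q → ReprSub π q e' → StackOf π k q l → StackOf π k p (e' :: l)

/-- Processes of the process calculus.  Messages `p̄` are on pointer-or-null channels;
receivers `p.M` listen on non-null pointer channels; `a.M` is an `n`-way sync prefix. -/
inductive Proc (α : Type) : Type where
  | msg (p : Option ℕ) : Proc α
  | par (M₁ M₂ : Proc α) : Proc α
  | recv (p : ℕ) (M : Proc α) : Proc α
  | sync (a : α) (M : Proc α) : Proc α

/-- Structural congruence: associativity/commutativity of `∥`. -/
inductive PCong {α : Type} : Proc α → Proc α → Prop where
  | refl (M : Proc α) : PCong M M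
  | symm {M N : Proc α} : PCong M N → PCong N M
  | trans {M N K : Proc α} : PCong M N → PCong N K → PCong M K
  | parComm (M N : Proc α) : PCong (Proc.par M N) (Proc.par N M)
  | parAssoc (M N K : Proc α) :
      PCong (Proc.par (Proc.par M N) K) (Proc.par M (Proc.par N K))
  | par {M M' N N' : Proc α} :
      PCong M M' → PCong N N' → PCong (Proc.par M N) (Proc.par M' N')
  | recv (p : ℕ) {M M' : Proc α} : PCong M M' → PCong (Proc.recv p M) (Proc.recv p M')
  | sync (a : α) {M M' : Proc α} : PCong M M' → PCong (Proc.sync a M) (Proc.sync a M')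

/-- Silent transitions `M → M'`: handshake communication, closed under parallel
context and structural congruence. -/
inductive PSilent {α : Type} : Proc α → Proc α → Prop where
  | comm (p : ℕ) (M : Proc α) :
      PSilent (Proc.par (Proc.recv p M) (Proc.msg (some p))) M
  | parL {M M' : Proc α} (N : Proc α) :
      PSilent M M' → PSilent (Proc.par M N) (Proc.par M' N)
  | congr {M M₁ M₂ M' : Proc α} :
      PCong M M₁ → PSilent M₁ M₂ → PCong M₂ M' → PSilent M M'

/-- `parList M [N₁, …, Nₙ] = M ∥ N₁ ∥ ⋯ ∥ Nₙ`. -/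
def parList {α : Type} : Proc α → List (Proc α) → Proc α
  | M, [] => M
  | M, N :: l => Proc.par M (parList N l)

/-- Labeled transitions `M →ᵃ M'`: `n`-way synchronization on `a` (discarding the rest),
closed under structural congruence. -/
inductive PLabel {α : Type} (a : α) : Proc α → Proc α → Prop where
  | sync (M₀ : Proc α) (Ms : List (Proc α)) (M' : Proc α) :
      (¬ ∃ M'' M''' : Proc α, PCong M' (Proc.par (Proc.sync a M'') M''')) →
      (∀ N : Proc α, ¬ PSilent M' N) →
      PLabel a (Proc.par (parList (Proc.sync a M₀) (Ms.map (Proc.sync a))) M')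
        (parList M₀ Ms)
  | congr {M M₁ M₂ M' : Proc α} :
      PCong M M₁ → PLabel a M₁ M₂ → PCong M₂ M' → PLabel a M M'

/-- The translation `⟦p⟧π` of a heap node into a process. -/
def transNode {α : Type} (k : ℕ → Option ℕ) (p : ℕ) : Node α → Proc α
  | Node.alt q₁ q₂ => Proc.recv p (Proc.par (Proc.msg (some q₁)) (Proc.msg (some q₂)))
  | Node.seq q₁ _ => Proc.recv p (Proc.msg (some q₁))
  | Node.star q₁ => Proc.recv p (Proc.par (Proc.msg (some q₁)) (Proc.msg (k p)))
  | Node.eps => Proc.recv p (Proc.msg (k p))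
  | Node.ch a => Proc.recv p (Proc.sync a (Proc.msg (k p)))

/-- The process for the node at pointer `p` of heap `π` (dummy if `p ∉ dom(π)`). -/
def nodeProc {α : Type} (π : Heap α) (k : ℕ → Option ℕ) (p : ℕ) : Proc α :=
  match π p with
  | some v => transNode k p v
  | none => Proc.msg none

/-- `M` is (a representation of) the translation `⟦π⟧`: the parallel composition
of `⟦p⟧π` over all `p ∈ dom(π)`. -/
def HeapProcOf {α : Type} (π : Heap α) (k : ℕ → Option ℕ) (M : Proc α) : Prop :=
  ∃ (p : ℕ) (l : List ℕ), (p :: l).Nodup ∧ (∀ q : ℕ, (π q).isSome ↔ q ∈ p :: l) ∧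
    M = parList (nodeProc π k p) (l.map (nodeProc π k))

/-- `M` is (a representation of) `S̄`: the parallel composition of the messages
`p̄` for `p ∈ S`. -/
def MsgsOf {α : Type} (S : Set (Option ℕ)) (M : Proc α) : Prop :=
  ∃ (p : Option ℕ) (l : List (Option ℕ)), (p :: l).Nodup ∧
    (∀ q : Option ℕ, q ∈ S ↔ q ∈ p :: l) ∧
    M = parList (Proc.msg p) (l.map Proc.msg)

/-! ### Auxiliary development for the stack-reconstruction invariant -/

section StackInvariant

variable {α : Type} {π : Heap α} {k : ℕ → Option ℕ} {p₀ : ℕ}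

/-- `π₁` is a sub-heap of `π`. -/
def SubH {α : Type} (π₁ π : Heap α) : Prop := ∀ q v, π₁ q = some v → π q = some v

lemma subH_trans {π₁ π₂ π₃ : Heap α} (h1 : SubH π₁ π₂) (h2 : SubH π₂ π₃) :
    SubH π₁ π₃ := fun q v h => h2 q v (h1 q v h)

lemma subH_union_left (π₁ π₂ : Heap α) : SubH π₁ (hUnion π₁ π₂) := by
  intro q v h; simp [hUnion, h]

lemma subH_union_right {π₁ π₂ : Heap α} (hd : hDisj π₁ π₂) :
    SubH π₂ (hUnion π₁ π₂) := by
  intro q v h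
  rcases hd q with h1 | h1
  · simp [hUnion, h1]; exact h
  · rw [h1] at h; exact absurd h (by simp)

lemma hDisj_union {π₀ π₁ π₂ : Heap α} (h1 : hDisj π₀ π₁) (h2 : hDisj π₀ π₂) :
    hDisj π₀ (hUnion π₁ π₂) := by
  intro q
  rcases h1 q with h | h
  · exact Or.inl h
  · rcases h2 q with h' | h'
    · exact Or.inl h'
    · right; simp [hUnion, h, h']

/-- The sub-heap form of the representation relation. -/
def ReprS {α : Type} (π : Heap α) (p : ℕ) (e : RE α) : Prop :=
  ∃ π', SubH π' π ∧ HeapRepr π' p e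

lemma singleH_self (p : ℕ) (v : Node α) : singleH p v p = some v := by
  simp [singleH]

lemma reprSub_iff {p : ℕ} {e : RE α} : ReprSub π p e ↔ ReprS π p e := by
  constructor
  · rintro ⟨π₁, π₂, hd, rfl, hr⟩
    exact ⟨π₁, subH_union_left π₁ π₂, hr⟩
  · rintro ⟨π', hs, hr⟩
    refine ⟨π', fun q => if (π' q).isSome then none else π q, ?_, ?_, hr⟩
    · intro q
      by_cases h : (π' q).isSome
      · right; simp [h]
      · left; exact Option.not_isSome_iff_eq_none.mp h
    · funext q
      by_cases h : (π' q).isSome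
      · obtain ⟨v, hv⟩ := Option.isSome_iff_exists.mp h
        rw [hs q v hv]; simp [hUnion, hv]
      · have hn : π' q = none := Option.not_isSome_iff_eq_none.mp h
        simp [hUnion, hn, h]

lemma reprS_eps {p : ℕ} (h : ReprS π p RE.eps) : π p = some Node.eps := by
  obtain ⟨π', hs, hr⟩ := h
  cases hr
  exact hs p _ (singleH_self p Node.eps)

lemma reprS_ch {p : ℕ} {a : α} (h : ReprS π p (RE.ch a)) :
    π p = some (Node.ch a) := by
  obtain ⟨π', hs, hr⟩ := h
  cases hr
  exact hs p _ (singleH_self p (Node.ch a))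

lemma reprS_alt {p : ℕ} {e₁ e₂ : RE α} (h : ReprS π p (RE.alt e₁ e₂)) :
    ∃ q₁ q₂, π p = some (Node.alt q₁ q₂) ∧ ReprS π q₁ e₁ ∧ ReprS π q₂ e₂ := by
  obtain ⟨π', hs, hr⟩ := h
  cases hr with
  | alt heq h01 h02 h12 hr1 hr2 =>
    rename_i π₁ π₂ p₁ p₂
    subst heq
    refine ⟨p₁, p₂, ?_, ?_, ?_⟩
    · exact hs p _ (by simp [hUnion, singleH_self])
    · exact ⟨π₁, subH_trans (subH_trans (subH_union_left π₁ π₂)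
        (subH_union_right (hDisj_union h01 h02))) hs, hr1⟩
    · exact ⟨π₂, subH_trans (subH_trans (subH_union_right h12)
        (subH_union_right (hDisj_union h01 h02))) hs, hr2⟩

lemma reprS_seq {p : ℕ} {e₁ e₂ : RE α} (h : ReprS π p (RE.seq e₁ e₂)) :
    ∃ q₁ q₂, π p = some (Node.seq q₁ q₂) ∧ ReprS π q₁ e₁ ∧ ReprS π q₂ e₂ := by
  obtain ⟨π', hs, hr⟩ := h
  cases hr with
  | seq heq h01 h02 h12 hr1 hr2 =>
    rename_i π₁ π₂ p₁ p₂
    subst heq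
    refine ⟨p₁, p₂, ?_, ?_, ?_⟩
    · exact hs p _ (by simp [hUnion, singleH_self])
    · exact ⟨π₁, subH_trans (subH_trans (subH_union_left π₁ π₂)
        (subH_union_right (hDisj_union h01 h02))) hs, hr1⟩
    · exact ⟨π₂, subH_trans (subH_trans (subH_union_right h12)
        (subH_union_right (hDisj_union h01 h02))) hs, hr2⟩

lemma reprS_star {p : ℕ} {e₁ : RE α} (h : ReprS π p (RE.star e₁)) :
    ∃ q₁, π p = some (Node.star q₁) ∧ ReprS π q₁ e₁ := by
  obtain ⟨π', hs, hr⟩ := h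
  cases hr with
  | star heq h01 hr1 =>
    rename_i π₁ p₁
    subst heq
    refine ⟨p₁, ?_, ?_⟩
    · exact hs p _ (by simp [hUnion, singleH_self])
    · exact ⟨π₁, subH_trans (subH_union_right h01) hs, hr1⟩

lemma stackOf_congr {p p' : ℕ} {l : List (RE α)} (h : k p = k p')
    (hl : StackOf π k p l) : StackOf π k p' l := by
  cases hl with
  | nil h0 => exact StackOf.nil (h ▸ h0)
  | cons hq hre hst => exact StackOf.cons (h ▸ hq) hre hst

/-- The simulation relation between PWπ and EKW configurations. -/
inductive Sim (π : Heap α) (k : ℕ → Option ℕ) :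
    Option ℕ × List α → EKWConfig α → Prop where
  | ptr {p : ℕ} {e' : RE α} {l : List (RE α)} {w : List α} :
      ReprS π p e' → StackOf π k p l → Sim π k (some p, w) (e', l, w)
  | ret {w : List α} : Sim π k (none, w) (RE.eps, [], w)
  | pop {q : ℕ} {e' : RE α} {l : List (RE α)} {w : List α} :
      ReprS π q e' → StackOf π k q l → Sim π k (some q, w) (RE.eps, e' :: l, w)

lemma sim_ret {p : ℕ} {l : List (RE α)} {w : List α} (hl : StackOf π k p l) :
    Sim π k (k p, w) (RE.eps, l, w) := by
  cases hl with
  | nil h0 => rw [h0]; exact Sim.ret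
  | cons hq hre hst => rw [hq]; exact Sim.pop (reprSub_iff.mp hre) hst

/-- One PWπ step from a `ptr` configuration is matched by EKW steps. -/
lemma fwd_step_ptr (hk : KOk π k p₀) {p : ℕ} {e' : RE α} {l : List (RE α)}
    {w : List α} {c₁ : Option ℕ × List α}
    (hr : ReprS π p e') (hl : StackOf π k p l)
    (hs : PWStep π k (some p, w) c₁) :
    ∃ d₁, Relation.ReflTransGen (EKWStep (α := α)) (e', l, w) d₁ ∧ Sim π k c₁ d₁ := by
  obtain ⟨hk1, hkalt, hkseq, hkstar, hk0⟩ := hk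
  cases hs with
  | silent hp =>
    cases hp with
    | altL h =>
      rename_i q₁ q₂
      cases e' with
      | alt e₁ e₂ =>
        obtain ⟨q₁', q₂', hpp, hr1, hr2⟩ := reprS_alt hr
        rw [h] at hpp
        injection hpp with hpp; injection hpp with h1 h2
        subst h1; subst h2
        exact ⟨(e₁, l, w), Relation.ReflTransGen.single EKWStep.altL,
          Sim.ptr hr1 (stackOf_congr (hkalt p q₁ q₂ h).1.symm hl)⟩
      | eps => rw [reprS_eps hr] at h; simp at h
      | ch a => rw [reprS_ch hr] at h; simp at h
      | star e₁ => obtain ⟨_, hpp, _⟩ := reprS_star hr; rw [hpp] at h; simp at h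
      | seq e₁ e₂ => obtain ⟨_, _, hpp, _, _⟩ := reprS_seq hr; rw [hpp] at h; simp at h
    | altR h =>
      rename_i q₁ q₂
      cases e' with
      | alt e₁ e₂ =>
        obtain ⟨q₁', q₂', hpp, hr1, hr2⟩ := reprS_alt hr
        rw [h] at hpp
        injection hpp with hpp; injection hpp with h1 h2
        subst h1; subst h2
        exact ⟨(e₂, l, w), Relation.ReflTransGen.single EKWStep.altR,
          Sim.ptr hr2 (stackOf_congr (hkalt p q₁ q₂ h).2.symm hl)⟩
      | eps => rw [reprS_eps hr] at h; simp at h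
      | ch a => rw [reprS_ch hr] at h; simp at h
      | star e₁ => obtain ⟨_, hpp, _⟩ := reprS_star hr; rw [hpp] at h; simp at h
      | seq e₁ e₂ => obtain ⟨_, _, hpp, _, _⟩ := reprS_seq hr; rw [hpp] at h; simp at h
    | seq h =>
      rename_i q₁ q₂
      cases e' with
      | seq e₁ e₂ =>
        obtain ⟨q₁', q₂', hpp, hr1, hr2⟩ := reprS_seq hr
        rw [h] at hpp
        injection hpp with hpp; injection hpp with h1 h2
        subst h1; subst h2
        refine ⟨(e₁, e₂ :: l, w), Relation.ReflTransGen.single EKWStep.seq, ?_⟩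
        exact Sim.ptr hr1 (StackOf.cons (hkseq p q₁ q₂ h).1 (reprSub_iff.mpr hr2)
          (stackOf_congr (hkseq p q₁ q₂ h).2.symm hl))
      | eps => rw [reprS_eps hr] at h; simp at h
      | ch a => rw [reprS_ch hr] at h; simp at h
      | star e₁ => obtain ⟨_, hpp, _⟩ := reprS_star hr; rw [hpp] at h; simp at h
      | alt e₁ e₂ => obtain ⟨_, _, hpp, _, _⟩ := reprS_alt hr; rw [hpp] at h; simp at h
    | starIn h =>
      rename_i q₁
      cases e' with
      | star e₁ =>
        obtain ⟨q₁', hpp, hr1⟩ := reprS_star hr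
        rw [h] at hpp
        injection hpp with hpp; injection hpp with h1
        subst h1
        refine ⟨(e₁, RE.star e₁ :: l, w), Relation.ReflTransGen.single EKWStep.starIn, ?_⟩
        exact Sim.ptr hr1 (StackOf.cons (hkstar p q₁ h) (reprSub_iff.mpr hr) hl)
      | eps => rw [reprS_eps hr] at h; simp at h
      | ch a => rw [reprS_ch hr] at h; simp at h
      | alt e₁ e₂ => obtain ⟨_, _, hpp, _, _⟩ := reprS_alt hr; rw [hpp] at h; simp at h
      | seq e₁ e₂ => obtain ⟨_, _, hpp, _, _⟩ := reprS_seq hr; rw [hpp] at h; simp at h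
    | starOut h =>
      rename_i q₁
      cases e' with
      | star e₁ =>
        exact ⟨(RE.eps, l, w), Relation.ReflTransGen.single EKWStep.starOut, sim_ret hl⟩
      | eps => rw [reprS_eps hr] at h; simp at h
      | ch a => rw [reprS_ch hr] at h; simp at h
      | alt e₁ e₂ => obtain ⟨_, _, hpp, _, _⟩ := reprS_alt hr; rw [hpp] at h; simp at h
      | seq e₁ e₂ => obtain ⟨_, _, hpp, _, _⟩ := reprS_seq hr; rw [hpp] at h; simp at h
    | eps h =>
      cases e' with
      | eps => exact ⟨(RE.eps, l, w), Relation.ReflTransGen.refl, sim_ret hl⟩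
      | ch a => rw [reprS_ch hr] at h; simp at h
      | star e₁ => obtain ⟨_, hpp, _⟩ := reprS_star hr; rw [hpp] at h; simp at h
      | alt e₁ e₂ => obtain ⟨_, _, hpp, _, _⟩ := reprS_alt hr; rw [hpp] at h; simp at h
      | seq e₁ e₂ => obtain ⟨_, _, hpp, _, _⟩ := reprS_seq hr; rw [hpp] at h; simp at h
  | read hp =>
    cases hp with
    | ch h =>
      rename_i a w'
      cases e' with
      | ch b =>
        have hb : π p = some (Node.ch b) := reprS_ch hr
        rw [h] at hb
        injection hb with hb; injection hb with hb
        subst hb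
        exact ⟨(RE.eps, l, w'), Relation.ReflTransGen.single EKWStep.ch, sim_ret hl⟩
      | eps => rw [reprS_eps hr] at h; simp at h
      | star e₁ => obtain ⟨_, hpp, _⟩ := reprS_star hr; rw [hpp] at h; simp at h
      | alt e₁ e₂ => obtain ⟨_, _, hpp, _, _⟩ := reprS_alt hr; rw [hpp] at h; simp at h
      | seq e₁ e₂ => obtain ⟨_, _, hpp, _, _⟩ := reprS_seq hr; rw [hpp] at h; simp at h

lemma fwd_step (hk : KOk π k p₀) {c c₁ : Option ℕ × List α} {d : EKWConfig α}
    (hsim : Sim π k c d) (hs : PWStep π k c c₁) :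
    ∃ d₁, Relation.ReflTransGen (EKWStep (α := α)) d d₁ ∧ Sim π k c₁ d₁ := by
  cases hsim with
  | ptr hr hl => exact fwd_step_ptr hk hr hl hs
  | ret =>
    exfalso
    cases hs with
    | silent hp => cases hp
    | read hp => cases hp
  | pop hr hl =>
    obtain ⟨d₁, hrun, hsim₁⟩ := fwd_step_ptr hk hr hl hs
    exact ⟨d₁, Relation.ReflTransGen.head EKWStep.pop hrun, hsim₁⟩

lemma bwd_step (hk : KOk π k p₀) {c : Option ℕ × List α} {d d₁ : EKWConfig α}
    (hsim : Sim π k c d) (hs : EKWStep d d₁) :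
    ∃ c₁, Relation.ReflTransGen (PWStep π k) c c₁ ∧ Sim π k c₁ d₁ := by
  obtain ⟨hk1, hkalt, hkseq, hkstar, hk0⟩ := hk
  cases hsim with
  | ret => cases hs
  | pop hr hl =>
    cases hs
    rename_i q e' l w
    exact ⟨(some q, w), Relation.ReflTransGen.refl, Sim.ptr hr hl⟩
  | ptr hr hl =>
    rename_i p e' l w
    cases hs with
    | altL =>
      obtain ⟨q₁, q₂, hpp, hr1, hr2⟩ := reprS_alt hr
      exact ⟨(some q₁, w), Relation.ReflTransGen.single (PWStep.silent (PStep.altL hpp)),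
        Sim.ptr hr1 (stackOf_congr (hkalt p q₁ q₂ hpp).1.symm hl)⟩
    | altR =>
      obtain ⟨q₁, q₂, hpp, hr1, hr2⟩ := reprS_alt hr
      exact ⟨(some q₂, w), Relation.ReflTransGen.single (PWStep.silent (PStep.altR hpp)),
        Sim.ptr hr2 (stackOf_congr (hkalt p q₁ q₂ hpp).2.symm hl)⟩
    | seq =>
      obtain ⟨q₁, q₂, hpp, hr1, hr2⟩ := reprS_seq hr
      refine ⟨(some q₁, w), Relation.ReflTransGen.single (PWStep.silent (PStep.seq hpp)), ?_⟩
      exact Sim.ptr hr1 (StackOf.cons (hkseq p q₁ q₂ hpp).1 (reprSub_iff.mpr hr2)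
        (stackOf_congr (hkseq p q₁ q₂ hpp).2.symm hl))
    | starIn =>
      obtain ⟨q₁, hpp, hr1⟩ := reprS_star hr
      refine ⟨(some q₁, w), Relation.ReflTransGen.single (PWStep.silent (PStep.starIn hpp)), ?_⟩
      exact Sim.ptr hr1 (StackOf.cons (hkstar p q₁ hpp) (reprSub_iff.mpr hr) hl)
    | starOut =>
      obtain ⟨q₁, hpp, hr1⟩ := reprS_star hr
      exact ⟨(k p, w), Relation.ReflTransGen.single (PWStep.silent (PStep.starOut hpp)),
        sim_ret hl⟩
    | ch =>
      rename_i a w'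
      have hpp := reprS_ch hr
      exact ⟨(k p, w'), Relation.ReflTransGen.single (PWStep.read (PStepA.ch hpp)),
        sim_ret hl⟩
    | pop =>
      have hpp := reprS_eps hr
      cases hl with
      | cons hq hre hst =>
        rename_i q
        refine ⟨(some q, w), ?_, Sim.ptr (reprSub_iff.mp hre) hst⟩
        have hpw : PWStep π k (some p, w) (some q, w) := by
          have := PWStep.silent (π := π) (k := k) (w := w) (PStep.eps hpp)
          rwa [hq] at this
        exact Relation.ReflTransGen.single hpw

lemma fwd_run (hk : KOk π k p₀) {c : Option ℕ × List α}
    (hrun : Relation.ReflTransGen (PWStep π k) c (none, ([] : List α))) :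
    ∀ d : EKWConfig α, Sim π k c d →
      Relation.ReflTransGen (EKWStep (α := α)) d (RE.eps, [], []) := by
  induction hrun using Relation.ReflTransGen.head_induction_on with
  | refl =>
    intro d hd
    cases hd
    exact Relation.ReflTransGen.refl
  | head hstep _ ih =>
    intro d hd
    obtain ⟨d₁, hd1, hsim1⟩ := fwd_step hk hd hstep
    exact Relation.ReflTransGen.trans hd1 (ih d₁ hsim1)

lemma bwd_run (hk : KOk π k p₀) {d : EKWConfig α}
    (hrun : Relation.ReflTransGen (EKWStep (α := α)) d (RE.eps, [], [])) :
    ∀ c : Option ℕ × List α, Sim π k c d →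
      Relation.ReflTransGen (PWStep π k) c (none, ([] : List α)) := by
  induction hrun using Relation.ReflTransGen.head_induction_on with
  | refl =>
    intro c hc
    cases hc with
    | ret => exact Relation.ReflTransGen.refl
    | ptr hr hl =>
      rename_i p
      have hpp := reprS_eps hr
      cases hl with
      | nil h0 =>
        have hpw : PWStep π k (some p, ([] : List α)) (none, []) := by
          have := PWStep.silent (π := π) (k := k) (w := ([] : List α)) (PStep.eps hpp)
          rwa [h0] at this
        exact Relation.ReflTransGen.single hpw
  | head hstep _ ih =>
    intro c hc
    obtain ⟨c₁, hc1, hsim1⟩ := bwd_step hk hc hstep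
    exact Relation.ReflTransGen.trans hc1 (ih c₁ hsim1)

end StackInvariant
/-- Stack-reconstruction simulation invariant: with `π, p₀ ⊨ e` and `π ⊨ k`,
for every pointer `p ∈ dom(π)` whose subtree represents `e'`, and `stackOf(p) = l`,
there is a PWπ run `⟨p | w⟩ →* ⟨null | ε⟩` iff there is an EKW run
`⟨e' | stackOf(p) | w⟩ →* ⟨ε | [] | ε⟩`. -/
theorem pw_ekw_stack_invariant {α : Type} [Fintype α] {π : Heap α} {p₀ : ℕ} {e : RE α}
    {k : ℕ → Option ℕ}
    (h : HeapRepr π p₀ e) (hk : KOk π k p₀) :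
    ∀ (p : ℕ) (e' : RE α) (l : List (RE α)) (w : List α),
      p ∈ hDom π → ReprSub π p e' → StackOf π k p l →
      (Relation.ReflTransGen (PWStep π k) (some p, w) (none, ([] : List α)) ↔
        Relation.ReflTransGen EKWStep
          ((e', l, w) : EKWConfig α)
          ((RE.eps, ([] : List (RE α)), ([] : List α)) : EKWConfig α)) := by
  intro p e' l w _ hrs hst
  have hsim : Sim π k (some p, w) (e', l, w) := Sim.ptr (reprSub_iff.mp hrs) hst
  constructor
  · intro hpw
    exact fwd_run hk hpw _ hsim
  · intro hekw
    exact bwd_run hk hekw _ hsim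

end RegexMachines
end

section
/- Termination of the parallel evolution: let π,p₀ ⊨ e and π ⊨ k, and let S ⊆ dom(π) ∪ {null} be a finite set of pointers. Then every silent transition sequence starting from the process S̄ ∥ ⟦π⟧ is finite; that is, there is no infinite sequence S̄ ∥ ⟦π⟧ → M₁ → M₂ → ⋯ of silent transitions. -/
set_option autoImplicit false

namespace RegexMachines

/-- Size of a process: every communication removes a message and a receiver prefix. -/
def psize {α : Type} : Proc α → ℕ
  | Proc.msg _ => 1
  | Proc.par M N => psize M + psize N
  | Proc.recv _ M => 1 + psize M
  | Proc.sync _ M => 1 + psize M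

theorem pcong_psize {α : Type} {M N : Proc α} (h : PCong M N) : psize M = psize N := by
  induction h <;> simp_all [psize] <;> omega

theorem psilent_psize {α : Type} {M N : Proc α} (h : PSilent M N) : psize N < psize M := by
  induction h with
  | comm p M => simp [psize]
  | parL N _ ih => simp [psize]; omega
  | congr h1 _ h3 ih => rw [pcong_psize h1, ← pcong_psize h3]; exact ih

/-- Termination of the parallel evolution: with `π, p₀ ⊨ e` and `π ⊨ k`,
every silent-transition sequence starting from `S̄ ∥ ⟦π⟧` is finite: there is no infinite
sequence `S̄ ∥ ⟦π⟧ → M₁ → M₂ → ⋯` of silent transitions. -/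
theorem parallel_evolution_terminates {α : Type} [Fintype α] {π : Heap α} {p₀ : ℕ}
    {e : RE α} {k : ℕ → Option ℕ}
    (h : HeapRepr π p₀ e) (hk : KOk π k p₀)
    (S : Set (Option ℕ)) (hS : S.Finite) (hSd : S ⊆ domP π) :
    ∀ MS Mπ : Proc α, MsgsOf S MS → HeapProcOf π k Mπ →
      ¬ ∃ f : ℕ → Proc α, f 0 = Proc.par MS Mπ ∧ ∀ n : ℕ, PSilent (f n) (f (n + 1)) := by
  rintro MS Mπ _ _ ⟨f, _, hstep⟩
  have hdec : ∀ n : ℕ, psize (f (n + 1)) < psize (f n) := fun n => psilent_psize (hstep n)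
  have hb : ∀ n : ℕ, psize (f n) + n ≤ psize (f 0) := by
    intro n
    induction n with
    | zero => omega
    | succ m ih => have := hdec m; omega
  have := hb (psize (f 0) + 1)
  omega

end RegexMachines
end
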